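/- arXiv:2012.08382 — 4 statements merged into one kernel-verified Lean document; each statement's English description precedes it below -/
import Mathlib

section
/- Let G = (V, E) be an N-player rescaled zero-sum polymatrix game: each player i ∈ V has action set A_i = {1,…,n_i}, payoff matrices A^{ij} ∈ ℝ^{n_i×n_j} on edges (i,j) ∈ E, utilities u_i(x) = Σ_{j:(i,j)∈E} x_i^T A^{ij} x_j, self-loop matrices are antisymmetric (A^{ii} = −(A^{ii})^T), and there exist positive constants η_i with Σ_{i∈V} η_i u_i(x) = 0 for all mixed strategy profiles x. Define the transformed vector field F on z ∈ ∏_{i∈V} ℝ^{n_i} by F_{iα}(z) = Σ_{j∈V} Σ_{β∈A_j} (A^{ij}_{αβ} − A^{ij}_{1β}) · e^{z_{jβ}} / (Σ_{ℓ∈A_j} e^{z_{jℓ}}). Then the divergence of F vanishes identically: Σ_{i∈V} Σ_{α∈A_i} ∂F_{iα}(z)/∂z_{iα} = 0 for every z. -/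
open Finset Filter MeasureTheory Topology

noncomputable section

def util {V : Type} [Fintype V] {n : V → ℕ}
    (E : V → V → Prop) [DecidableRel E]
    (A : ∀ i j : V, Matrix (Fin (n i)) (Fin (n j)) ℝ)
    (x : ∀ i : V, Fin (n i) → ℝ) (i : V) : ℝ :=
  ∑ j ∈ univ.filter (fun j => E i j), ∑ α, ∑ β, x i α * A i j α β * x j β

def putil {V : Type} [Fintype V] {n : V → ℕ}
    (E : V → V → Prop) [DecidableRel E]
    (A : ∀ i j : V, Matrix (Fin (n i)) (Fin (n j)) ℝ)
    (x : ∀ i : V, Fin (n i) → ℝ) (i : V) (α : Fin (n i)) : ℝ :=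
  ∑ j ∈ univ.filter (fun j => E i j), ∑ β, A i j α β * x j β

def inSimplex {V : Type} [Fintype V] {n : V → ℕ} (x : ∀ i : V, Fin (n i) → ℝ) : Prop :=
  (∀ i α, 0 ≤ x i α) ∧ ∀ i, ∑ α, x i α = 1

def inIntSimplex {V : Type} [Fintype V] {n : V → ℕ} (x : ∀ i : V, Fin (n i) → ℝ) : Prop :=
  (∀ i α, 0 < x i α) ∧ ∀ i, ∑ α, x i α = 1

def IsNash {V : Type} [Fintype V] [DecidableEq V] {n : V → ℕ}
    (E : V → V → Prop) [DecidableRel E]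
    (A : ∀ i j : V, Matrix (Fin (n i)) (Fin (n j)) ℝ)
    (x : ∀ i : V, Fin (n i) → ℝ) : Prop :=
  inSimplex x ∧ ∀ (i : V) (y : Fin (n i) → ℝ), (∀ α, 0 ≤ y α) → (∑ α, y α = 1) →
    util E A (Function.update x i y) i ≤ util E A x i

def RescaledZeroSum {V : Type} [Fintype V] {n : V → ℕ}
    (E : V → V → Prop) [DecidableRel E]
    (A : ∀ i j : V, Matrix (Fin (n i)) (Fin (n j)) ℝ) (η : V → ℝ) : Prop :=
  (∀ i, 0 < η i) ∧
  (∀ x, inSimplex x → ∑ i, η i * util E A x i = 0) ∧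
  (∀ (i : V) (α β : Fin (n i)), A i i α β = - A i i β α)

def IsReplicator {V : Type} [Fintype V] {n : V → ℕ}
    (E : V → V → Prop) [DecidableRel E]
    (A : ∀ i j : V, Matrix (Fin (n i)) (Fin (n j)) ℝ)
    (x : ℝ → ∀ i : V, Fin (n i) → ℝ) : Prop :=
  (∀ t, 0 ≤ t → inSimplex (x t)) ∧
  ∀ t, 0 ≤ t → ∀ (i : V) (α : Fin (n i)),
    HasDerivAt (fun s => x s i α)
      (x t i α * (putil E A (x t) i α - util E A (x t) i)) t

/-- The transformed replicator vector field `F` in the cumulative payoff coordinates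
`z_{iα} = ln(x_{iα}/x_{i1})`:
`F_{iα}(z) = Σ_{j∈V} Σ_{β∈A_j} (A^{ij}_{αβ} − A^{ij}_{1β}) e^{z_{jβ}} / Σ_{ℓ∈A_j} e^{z_{jℓ}}`. -/
def Fvec {V : Type} [Fintype V] {n : V → ℕ} (hn : ∀ i, 0 < n i)
    (A : ∀ i j : V, Matrix (Fin (n i)) (Fin (n j)) ℝ)
    (z : ∀ i : V, Fin (n i) → ℝ) (i : V) (α : Fin (n i)) : ℝ :=
  ∑ j, ∑ β, ((A i j α β - A i j ⟨0, hn i⟩ β) * Real.exp (z j β)) / (∑ ℓ, Real.exp (z j ℓ))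

lemma skew_sum {m : ℕ} (M : Matrix (Fin m) (Fin m) ℝ)
    (hM : ∀ α β, M α β = -M β α) (q : Fin m → ℝ) :
    ∑ α, ∑ β, q α * (M α β * q β) = 0 := by
  have h : (∑ α, ∑ β, q α * (M α β * q β)) = -∑ α, ∑ β, q α * (M α β * q β) := by
    calc ∑ α, ∑ β, q α * (M α β * q β)
        = ∑ α, ∑ β, -(q β * (M β α * q α)) := by
          refine Finset.sum_congr rfl fun x _ => Finset.sum_congr rfl fun y _ => ?_
          rw [hM x y]; ring
      _ = -∑ α, ∑ β, q β * (M β α * q α) := by simp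
      _ = -∑ β, ∑ α, q β * (M β α * q α) := by rw [Finset.sum_comm]
  linarith

lemma softmax_hasDeriv {m : ℕ} (c w : Fin m → ℝ) (α : Fin m) :
    HasDerivAt (fun t : ℝ => ∑ β, (c β * Real.exp (Function.update w α t β)) /
        (∑ ℓ, Real.exp (Function.update w α t ℓ)))
      ((c α * (∑ ℓ, Real.exp (w ℓ)) - ∑ β, c β * Real.exp (w β)) * Real.exp (w α)
        / (∑ ℓ, Real.exp (w ℓ)) ^ 2)
      (w α) := by
  set S₀ : ℝ := ∑ β ∈ Finset.univ.erase α, Real.exp (w β) with hS0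
  set B : ℝ := ∑ β ∈ Finset.univ.erase α, c β * Real.exp (w β) with hB
  have hS0nonneg : 0 ≤ S₀ := Finset.sum_nonneg fun β _ => (Real.exp_pos _).le
  have hfun : (fun t : ℝ => ∑ β, (c β * Real.exp (Function.update w α t β)) /
        (∑ ℓ, Real.exp (Function.update w α t ℓ)))
      = fun t => (B + c α * Real.exp t) / (S₀ + Real.exp t) := by
    funext t
    have hden : (∑ ℓ, Real.exp (Function.update w α t ℓ)) = S₀ + Real.exp t := by
      rw [← Finset.sum_erase_add _ _ (Finset.mem_univ α), Function.update_self]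
      congr 1
      exact Finset.sum_congr rfl fun ℓ hℓ => by
        rw [Function.update_of_ne (Finset.mem_erase.mp hℓ).1]
    have hnum : (∑ β, c β * Real.exp (Function.update w α t β)) = B + c α * Real.exp t := by
      rw [← Finset.sum_erase_add _ _ (Finset.mem_univ α), Function.update_self]
      congr 1
      exact Finset.sum_congr rfl fun β hβ => by
        rw [Function.update_of_ne (Finset.mem_erase.mp hβ).1]
    rw [hden, ← Finset.sum_div, hnum]
  rw [hfun]
  have hne : S₀ + Real.exp (w α) ≠ 0 := by positivity
  have hnumd : HasDerivAt (fun t : ℝ => B + c α * Real.exp t) (c α * Real.exp (w α)) (w α) :=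
    ((Real.hasDerivAt_exp (w α)).const_mul (c α)).const_add B
  have hdend : HasDerivAt (fun t : ℝ => S₀ + Real.exp t) (Real.exp (w α)) (w α) :=
    (Real.hasDerivAt_exp (w α)).const_add S₀
  have h := hnumd.div hdend hne
  refine h.congr_deriv ?_
  have h1 : S₀ + Real.exp (w α) = ∑ ℓ, Real.exp (w ℓ) :=
    Finset.sum_erase_add _ _ (Finset.mem_univ α)
  have h2 : B + c α * Real.exp (w α) = ∑ β, c β * Real.exp (w β) :=
    Finset.sum_erase_add _ _ (Finset.mem_univ α)
  rw [← h1, ← h2]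
  ring

/-- In an N-player rescaled zero-sum polymatrix game (positive rescaling
coefficients `η`, `Σ_i η_i u_i(x) = 0` on the strategy space, antisymmetric self-loops),
the divergence of the transformed replicator vector field `F` vanishes identically:
`Σ_{i∈V} Σ_{α∈A_i} ∂F_{iα}(z)/∂z_{iα} = 0` for every `z`. -/
theorem divergence_of_transformed_replicator_vanishes
    {V : Type} [Fintype V] [DecidableEq V] {n : V → ℕ} (hn : ∀ i, 0 < n i)
    (E : V → V → Prop) [DecidableRel E] (hE : Symmetric E)
    (A : ∀ i j : V, Matrix (Fin (n i)) (Fin (n j)) ℝ)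
    (hA0 : ∀ i j, ¬ E i j → A i j = 0)
    (η : V → ℝ) (hRZS : RescaledZeroSum E A η)
    (z : ∀ i : V, Fin (n i) → ℝ) :
    ∑ i, ∑ α,
      deriv (fun t : ℝ =>
          Fvec hn A (Function.update z i (Function.update (z i) α t)) i α) (z i α) = 0 := by
  obtain ⟨hη, hsum, hanti⟩ := hRZS
  apply Finset.sum_eq_zero
  intro i _
  have hanti' : ∀ α β : Fin (n i), A i i α β = -A i i β α := hanti i
  have hdiag : ∀ α : Fin (n i), A i i α α = 0 := fun α => by
    have := hanti' α α; linarith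
  have key : ∀ α : Fin (n i),
      HasDerivAt
        (fun t : ℝ => Fvec hn A (Function.update z i (Function.update (z i) α t)) i α)
        (((A i i α α - A i i ⟨0, hn i⟩ α) * (∑ ℓ, Real.exp (z i ℓ))
            - ∑ β, (A i i α β - A i i ⟨0, hn i⟩ β) * Real.exp (z i β)) * Real.exp (z i α)
          / (∑ ℓ, Real.exp (z i ℓ)) ^ 2) (z i α) := by
    intro α
    have hfun : (fun t : ℝ => Fvec hn A (Function.update z i (Function.update (z i) α t)) i α)
        = fun t =>
          (∑ j ∈ Finset.univ.erase i, ∑ β,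
              ((A i j α β - A i j ⟨0, hn i⟩ β) * Real.exp (z j β)) / (∑ ℓ, Real.exp (z j ℓ)))
          + ∑ β, ((A i i α β - A i i ⟨0, hn i⟩ β) * Real.exp (Function.update (z i) α t β)) /
              (∑ ℓ, Real.exp (Function.update (z i) α t ℓ)) := by
      funext t
      unfold Fvec
      rw [← Finset.sum_erase_add _ _ (Finset.mem_univ i)]
      congr 1
      · exact Finset.sum_congr rfl fun j hj => by
          rw [Function.update_of_ne (Finset.mem_erase.mp hj).1]
      · simp only [Function.update_self]
    rw [hfun]
    exact (softmax_hasDeriv (fun β => A i i α β - A i i ⟨0, hn i⟩ β) (z i) α).const_add _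
  have hsum' : (∑ α : Fin (n i), deriv (fun t : ℝ =>
        Fvec hn A (Function.update z i (Function.update (z i) α t)) i α) (z i α))
      = ∑ α : Fin (n i),
        (((A i i α α - A i i ⟨0, hn i⟩ α) * (∑ ℓ, Real.exp (z i ℓ))
            - ∑ β, (A i i α β - A i i ⟨0, hn i⟩ β) * Real.exp (z i β)) * Real.exp (z i α)
          / (∑ ℓ, Real.exp (z i ℓ)) ^ 2) :=
    Finset.sum_congr rfl fun α _ => (key α).deriv
  rw [hsum', ← Finset.sum_div]
  have hskew : ∑ α, ∑ β, Real.exp (z i α) * (A i i α β * Real.exp (z i β)) = 0 :=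
    skew_sum (A i i) hanti' (fun β => Real.exp (z i β))
  have hnum : (∑ α : Fin (n i),
      ((A i i α α - A i i ⟨0, hn i⟩ α) * (∑ ℓ, Real.exp (z i ℓ))
          - ∑ β, (A i i α β - A i i ⟨0, hn i⟩ β) * Real.exp (z i β)) * Real.exp (z i α)) = 0 := by
    have step : ∀ α : Fin (n i),
        ((A i i α α - A i i ⟨0, hn i⟩ α) * (∑ ℓ, Real.exp (z i ℓ))
            - ∑ β, (A i i α β - A i i ⟨0, hn i⟩ β) * Real.exp (z i β)) * Real.exp (z i α)
          = -(A i i ⟨0, hn i⟩ α * Real.exp (z i α)) * (∑ ℓ, Real.exp (z i ℓ))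
            - (∑ β, Real.exp (z i α) * (A i i α β * Real.exp (z i β)))
            + Real.exp (z i α) * (∑ β, A i i ⟨0, hn i⟩ β * Real.exp (z i β)) := by
      intro α
      rw [hdiag α,
        show (∑ β, (A i i α β - A i i ⟨0, hn i⟩ β) * Real.exp (z i β))
            = (∑ β, A i i α β * Real.exp (z i β))
              - ∑ β, A i i ⟨0, hn i⟩ β * Real.exp (z i β) from by
          simp [sub_mul, Finset.sum_sub_distrib],
        show (∑ β, Real.exp (z i α) * (A i i α β * Real.exp (z i β)))
            = Real.exp (z i α) * ∑ β, A i i α β * Real.exp (z i β) from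
          (Finset.mul_sum _ _ _).symm]
      ring
    rw [Finset.sum_congr rfl fun α _ => step α, Finset.sum_add_distrib,
      Finset.sum_sub_distrib, hskew, ← Finset.sum_mul, ← Finset.sum_mul]
    simp only [Finset.sum_neg_distrib]
    ring
  rw [hnum, zero_div]
end
end

section
/- Consider a time-evolving system of populations y_1,…,y_{n_y} ∈ Δ^{n−1} and environments w_1,…,w_{n_w} ∈ Δ^{n−1} evolving (componentwise, with interior initial conditions) by ẇ_{k,i} = w_{k,i} Σ_{ℓ∈N^w_k} Σ_j w_{k,j}((A^{k,ℓ}y_ℓ)_i − (A^{k,ℓ}y_ℓ)_j) and ẏ_{ℓ,i} = y_{ℓ,i}((P_ℓ(w)y_ℓ)_i − y_ℓ^T P_ℓ(w) y_ℓ), where P_ℓ(w) = P_ℓ + Σ_{k∈N^y_ℓ} W^{ℓ,k} and W^{ℓ,k}_{ij} = (A^{ℓ,k}w_k)_i − (A^{ℓ,k}w_k)_j. Then along any solution: each environment satisfies ẇ_{k,i} = w_{k,i} Σ_{ℓ∈N^w_k}((A^{k,ℓ}y_ℓ)_i − w_k^T A^{k,ℓ} y_ℓ) and each population satisfies ẏ_{ℓ,i}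 = y_{ℓ,i}((P_ℓ y_ℓ)_i − y_ℓ^T P_ℓ y_ℓ) + y_{ℓ,i} Σ_{k∈N^y_ℓ}((A^{ℓ,k}w_k)_i − y_ℓ^T A^{ℓ,k}w_k); i.e., the system coincides with replicator dynamics in the static polymatrix game where population ℓ plays A^{ℓ,ℓ} = P_ℓ against itself and A^{ℓ,k} against each connected environment k, and environment k plays A^{k,ℓ} against each connected population ℓ. -/
open Finset Filter Topology

noncomputable section

private lemma const_of_deriv_zero' (f : ℝ → ℝ)
    (hf : ∀ s, 0 ≤ s → HasDerivAt f 0 s) {t : ℝ} (ht : 0 ≤ t) : f t = f 0 := by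
  have hc : ContinuousOn f (Set.Icc 0 t) := fun x hx =>
    ((hf x hx.1).continuousAt).continuousWithinAt
  exact constant_of_has_deriv_right_zero hc
    (fun x hx => ((hf x hx.1).hasDerivWithinAt)) t (Set.right_mem_Icc.2 ht)

private lemma const_one_of_deriv' (f c : ℝ → ℝ)
    (hc : ∀ s, 0 ≤ s → ContinuousAt c s)
    (hf : ∀ s, 0 ≤ s → HasDerivAt f (c s * (1 - f s)) s)
    (h0 : f 0 = 1) {t : ℝ} (ht : 0 ≤ t) : f t = 1 := by
  obtain ⟨C, hC⟩ := (isCompact_Icc (a := (0:ℝ)) (b := t)).exists_bound_of_continuousOn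
    (fun x hx => (hc x hx.1).continuousWithinAt)
  have hgc : ContinuousOn (fun s => f s - 1) (Set.Icc 0 t) := fun x hx =>
    (((hf x hx.1).continuousAt).sub continuousAt_const).continuousWithinAt
  have key := norm_le_gronwallBound_of_norm_deriv_right_le (f := fun s => f s - 1)
    (f' := fun s => c s * (1 - f s)) (δ := 0) (K := C) (ε := 0) (a := 0) (b := t)
    hgc (fun x hx => by simpa using ((hf x hx.1).sub_const 1).hasDerivWithinAt)
    (by simp [h0])
    (fun x hx => by
      have h1 : ‖c x‖ ≤ C := hC x (Set.mem_Icc.2 ⟨hx.1, le_of_lt hx.2⟩)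
      have h2 : ‖c x * (1 - f x)‖ = ‖c x‖ * ‖f x - 1‖ := by
        rw [norm_mul, norm_sub_rev]
      rw [h2, add_zero]
      exact mul_le_mul_of_nonneg_right h1 (norm_nonneg _))
  have h2 := key t (Set.right_mem_Icc.2 ht)
  rw [gronwallBound_ε0_δ0] at h2
  have := norm_le_zero_iff.1 h2
  linarith [sub_eq_zero.1 this]

private lemma zz' {n : ℕ} (v a : Fin n → ℝ) :
    ∑ i, ∑ j, v i * (v j * (a i - a j)) = 0 := by
  simp only [mul_sub, Finset.sum_sub_distrib, sub_eq_zero]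
  rw [Finset.sum_comm]
  exact Finset.sum_congr rfl fun i _ => Finset.sum_congr rfl fun j _ => by ring

private lemma envzero' {n : ℕ} {L : Type} (S : Finset L) (v : Fin n → ℝ)
    (a : L → Fin n → ℝ) :
    ∑ i, v i * ∑ ℓ ∈ S, ∑ j, v j * (a ℓ i - a ℓ j) = 0 := by
  simp only [Finset.mul_sum]
  rw [Finset.sum_comm]
  exact Finset.sum_eq_zero fun ℓ _ => zz' v (a ℓ)

private lemma popsum' {n : ℕ} (v : Fin n → ℝ) (M : Fin n → Fin n → ℝ) :
    ∑ i, v i * ((∑ j, M i j * v j) - (∑ a, ∑ b, v a * M a b * v b))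
      = (∑ a, ∑ b, v a * M a b * v b) * (1 - ∑ i, v i) := by
  rw [mul_one_sub]
  simp only [mul_sub, Finset.sum_sub_distrib]
  congr 1
  · simp only [Finset.mul_sum, mul_assoc]
  · rw [← Finset.sum_mul, mul_comm]

private lemma envrw' {n : ℕ} (v : Fin n → ℝ) (hv : ∑ j, v j = 1)
    (A : Fin n → Fin n → ℝ) (u : Fin n → ℝ) (i : Fin n) :
    ∑ j, v j * ((∑ b, A i b * u b) - (∑ b, A j b * u b))
      = (∑ b, A i b * u b) - ∑ p, ∑ q, v p * A p q * u q := by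
  have h : ∑ j, v j * ((∑ b, A i b * u b) - (∑ b, A j b * u b))
      = (∑ j, v j) * (∑ b, A i b * u b) - ∑ j, v j * ∑ b, A j b * u b := by
    simp only [mul_sub, Finset.sum_sub_distrib, Finset.sum_mul]
  rw [h, hv, one_mul]
  congr 1
  exact Finset.sum_congr rfl fun p _ => by
    rw [Finset.mul_sum]; exact Finset.sum_congr rfl fun q _ => by ring

private lemma poprw' {n : ℕ} {Kt : Type} (S : Finset Kt) (v : Fin n → ℝ) (hv : ∑ j, v j = 1)
    (P : Fin n → Fin n → ℝ) (a : Kt → Fin n → ℝ) (i : Fin n) :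
    v i * ((∑ j, (P i j + ∑ k ∈ S, (a k i - a k j)) * v j)
      - ∑ p, ∑ q, v p * (P p q + ∑ k ∈ S, (a k p - a k q)) * v q)
    = v i * ((∑ j, P i j * v j) - ∑ p, ∑ q, v p * P p q * v q)
      + v i * ∑ k ∈ S, ((a k i) - ∑ p, v p * a k p) := by
  have h1 : ∑ j, (P i j + ∑ k ∈ S, (a k i - a k j)) * v j
      = (∑ j, P i j * v j) + ∑ k ∈ S, ((a k i) - ∑ p, v p * a k p) := by
    simp only [add_mul, Finset.sum_add_distrib, Finset.sum_mul, sub_mul,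
      Finset.sum_sub_distrib]
    congr 1
    congr 1
    · rw [Finset.sum_comm]
      exact Finset.sum_congr rfl fun k _ => by rw [← Finset.mul_sum, hv, mul_one]
    · rw [Finset.sum_comm]
      exact Finset.sum_congr rfl fun k _ => Finset.sum_congr rfl fun p _ => mul_comm _ _
  have hz : ∑ p, ∑ q, v p * ((∑ k ∈ S, (a k p - a k q)) * v q) = 0 := by
    simp only [Finset.sum_mul, Finset.mul_sum]
    conv_lhs => enter [2, p]; rw [Finset.sum_comm]
    rw [Finset.sum_comm]
    exact Finset.sum_eq_zero fun k _ => by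
      rw [← zz' v (a k)]
      exact Finset.sum_congr rfl fun p _ => Finset.sum_congr rfl fun q _ => by ring
  have h2 : ∑ p, ∑ q, v p * (P p q + ∑ k ∈ S, (a k p - a k q)) * v q
      = ∑ p, ∑ q, v p * P p q * v q := by
    have he : ∀ p q, v p * (P p q + ∑ k ∈ S, (a k p - a k q)) * v q
        = v p * P p q * v q + v p * ((∑ k ∈ S, (a k p - a k q)) * v q) := fun p q => by ring
    simp only [he, Finset.sum_add_distrib, hz, add_zero]
  rw [h1, h2]
  ring

/-- A time-evolving system of populations `y_ℓ ∈ Δ^{n−1}` and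
environments `w_k ∈ Δ^{n−1}` evolving by
`ẇ_{k,i} = w_{k,i} Σ_{ℓ∈N^w_k} Σ_j w_{k,j}((A^{k,ℓ}y_ℓ)_i − (A^{k,ℓ}y_ℓ)_j)` and
`ẏ_{ℓ,i} = y_{ℓ,i}((P_ℓ(w)y_ℓ)_i − y_ℓᵀ P_ℓ(w) y_ℓ)`, with
`P_ℓ(w) = P_ℓ + Σ_{k∈N^y_ℓ} W^{ℓ,k}` and `W^{ℓ,k}_{ij} = (A^{ℓ,k}w_k)_i − (A^{ℓ,k}w_k)_j`,
coincides with replicator dynamics in the static polymatrix game in which population `ℓ`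
plays `P_ℓ` against itself and `A^{ℓ,k}` against each connected environment `k`, and
environment `k` plays `A^{k,ℓ}` against each connected population `ℓ`. -/
theorem time_evolving_system_is_replicator_in_polymatrix_game
    {K L : Type} [Fintype K] [Fintype L] (n : ℕ)
    (Nw : K → Finset L) (Ny : L → Finset K)
    (hsym : ∀ (k : K) (ℓ : L), ℓ ∈ Nw k ↔ k ∈ Ny ℓ)
    (Awy : K → L → Matrix (Fin n) (Fin n) ℝ)   -- `A^{k,ℓ}`
    (Ayw : L → K → Matrix (Fin n) (Fin n) ℝ)   -- `A^{ℓ,k}`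
    (P : L → Matrix (Fin n) (Fin n) ℝ)          -- `P_ℓ`
    (w : ℝ → K → Fin n → ℝ) (y : ℝ → L → Fin n → ℝ)
    (hw0 : ∀ k, (∀ i, 0 < w 0 k i) ∧ ∑ i, w 0 k i = 1)
    (hy0 : ∀ ℓ, (∀ i, 0 < y 0 ℓ i) ∧ ∑ i, y 0 ℓ i = 1)
    (hwode : ∀ t, 0 ≤ t → ∀ (k : K) (i : Fin n), HasDerivAt (fun s => w s k i)
      (w t k i * ∑ ℓ ∈ Nw k, ∑ j, w t k j *
        ((∑ b, Awy k ℓ i b * y t ℓ b) - (∑ b, Awy k ℓ j b * y t ℓ b))) t)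
    (hyode : ∀ t, 0 ≤ t → ∀ (ℓ : L) (i : Fin n), HasDerivAt (fun s => y s ℓ i)
      (y t ℓ i *
        ((∑ j, (P ℓ i j + ∑ k ∈ Ny ℓ,
            ((∑ b, Ayw ℓ k i b * w t k b) - (∑ b, Ayw ℓ k j b * w t k b))) * y t ℓ j)
          - ∑ a, ∑ b, y t ℓ a *
              (P ℓ a b + ∑ k ∈ Ny ℓ,
                ((∑ d, Ayw ℓ k a d * w t k d) - (∑ d, Ayw ℓ k b d * w t k d))) * y t ℓ b)) t) :
    -- environments follow replicator dynamics against their connected populations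
    (∀ t, 0 ≤ t → ∀ (k : K) (i : Fin n), HasDerivAt (fun s => w s k i)
      (w t k i * ∑ ℓ ∈ Nw k,
        ((∑ b, Awy k ℓ i b * y t ℓ b) - ∑ a, ∑ b, w t k a * Awy k ℓ a b * y t ℓ b)) t) ∧
    -- populations follow replicator dynamics of the self-loop game `P_ℓ` together with
    -- the edge games `A^{ℓ,k}` against their connected environments
    (∀ t, 0 ≤ t → ∀ (ℓ : L) (i : Fin n), HasDerivAt (fun s => y s ℓ i)
      (y t ℓ i * ((∑ j, P ℓ i j * y t ℓ j) - ∑ a, ∑ b, y t ℓ a * P ℓ a b * y t ℓ b)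
        + y t ℓ i * ∑ k ∈ Ny ℓ,
            ((∑ b, Ayw ℓ k i b * w t k b) - ∑ a, ∑ b, y t ℓ a * Ayw ℓ k a b * w t k b)) t) := by
  -- the simplex sums are conserved
  have hwS : ∀ t, 0 ≤ t → ∀ k, ∑ i, w t k i = 1 := by
    intro t ht k
    have h := const_of_deriv_zero' (fun s => ∑ i, w s k i) (fun s hs => by
      have hd : HasDerivAt (fun u => ∑ i, w u k i)
          (∑ i, w s k i * ∑ ℓ ∈ Nw k, ∑ j, w s k j *
            ((∑ b, Awy k ℓ i b * y s ℓ b) - (∑ b, Awy k ℓ j b * y s ℓ b))) s :=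
        HasDerivAt.fun_sum fun i _ => hwode s hs k i
      have hz : (∑ i, w s k i * ∑ ℓ ∈ Nw k, ∑ j, w s k j *
            ((∑ b, Awy k ℓ i b * y s ℓ b) - (∑ b, Awy k ℓ j b * y s ℓ b))) = 0 :=
        envzero' (Nw k) (w s k) (fun ℓ p => ∑ b, Awy k ℓ p b * y s ℓ b)
      exact hz ▸ hd) ht
    simpa [(hw0 k).2] using h
  have hyS : ∀ t, 0 ≤ t → ∀ ℓ, ∑ i, y t ℓ i = 1 := by
    intro t ht ℓ
    set c : ℝ → ℝ := fun u => ∑ a, ∑ b, y u ℓ a *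
        (P ℓ a b + ∑ k ∈ Ny ℓ,
          ((∑ d, Ayw ℓ k a d * w u k d) - (∑ d, Ayw ℓ k b d * w u k d))) * y u ℓ b with hcdef
    have hcc : ∀ s, 0 ≤ s → ContinuousAt c s := by
      intro s hs
      have hyc : ∀ ℓ' a, ContinuousAt (fun u => y u ℓ' a) s :=
        fun ℓ' a => (hyode s hs ℓ' a).continuousAt
      have hwc : ∀ k a, ContinuousAt (fun u => w u k a) s :=
        fun k a => (hwode s hs k a).continuousAt
      have hsum : ∀ {ι : Type} (T : Finset ι) (f : ι → ℝ → ℝ),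
          (∀ i ∈ T, ContinuousAt (f i) s) → ContinuousAt (fun u => ∑ i ∈ T, f i u) s :=
        fun T f h => tendsto_finset_sum T h
      refine hsum _ _ fun a _ => hsum _ _ fun b _ => ?_
      exact ((hyc ℓ a).mul (continuousAt_const.add
        (hsum _ _ fun k _ => ((hsum _ _ fun d _ => (hwc k d).const_mul _).sub
          (hsum _ _ fun d _ => (hwc k d).const_mul _))))).mul (hyc ℓ b)
    have h := const_one_of_deriv' (fun u => ∑ i, y u ℓ i) c hcc (fun s hs => by
      have hd : HasDerivAt (fun u => ∑ i, y u ℓ i)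
          (∑ i, y s ℓ i *
            ((∑ j, (P ℓ i j + ∑ k ∈ Ny ℓ,
                ((∑ b, Ayw ℓ k i b * w s k b) - (∑ b, Ayw ℓ k j b * w s k b))) * y s ℓ j)
              - ∑ a, ∑ b, y s ℓ a *
                  (P ℓ a b + ∑ k ∈ Ny ℓ,
                    ((∑ d, Ayw ℓ k a d * w s k d) - (∑ d, Ayw ℓ k b d * w s k d))) * y s ℓ b)) s :=
        HasDerivAt.fun_sum fun i _ => hyode s hs ℓ i
      have hz := popsum' (y s ℓ) (fun p q => P ℓ p q + ∑ k ∈ Ny ℓ,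
        ((∑ d, Ayw ℓ k p d * w s k d) - (∑ d, Ayw ℓ k q d * w s k d)))
      exact hz ▸ hd) (hy0 ℓ).2 ht
    exact h
  constructor
  · intro t ht k i
    have h := hwode t ht k i
    have e : (w t k i * ∑ ℓ ∈ Nw k, ∑ j, w t k j *
          ((∑ b, Awy k ℓ i b * y t ℓ b) - (∑ b, Awy k ℓ j b * y t ℓ b)))
        = (w t k i * ∑ ℓ ∈ Nw k,
          ((∑ b, Awy k ℓ i b * y t ℓ b) - ∑ a, ∑ b, w t k a * Awy k ℓ a b * y t ℓ b)) := by
      congr 1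
      exact Finset.sum_congr rfl fun ℓ _ => envrw' (w t k) (hwS t ht k) (Awy k ℓ) (y t ℓ) i
    exact e ▸ h
  · intro t ht ℓ i
    have h := hyode t ht ℓ i
    have e := poprw' (Ny ℓ) (y t ℓ) (hyS t ht ℓ) (P ℓ)
      (fun k p => ∑ b, Ayw ℓ k p b * w t k b) i
    have e2 : (y t ℓ i * ((∑ j, P ℓ i j * y t ℓ j) - ∑ p, ∑ q, y t ℓ p * P ℓ p q * y t ℓ q)
        + y t ℓ i * ∑ k ∈ Ny ℓ,
            ((∑ b, Ayw ℓ k i b * w t k b) - ∑ p, y t ℓ p * ∑ b, Ayw ℓ k p b * w t k b))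
        = (y t ℓ i * ((∑ j, P ℓ i j * y t ℓ j) - ∑ a, ∑ b, y t ℓ a * P ℓ a b * y t ℓ b)
          + y t ℓ i * ∑ k ∈ Ny ℓ,
              ((∑ b, Ayw ℓ k i b * w t k b) - ∑ a, ∑ b, y t ℓ a * Ayw ℓ k a b * w t k b)) := by
      congr 1
      congr 1
      refine Finset.sum_congr rfl fun k _ => ?_
      congr 1
      exact Finset.sum_congr rfl fun p _ => by
        rw [Finset.mul_sum]; exact Finset.sum_congr rfl fun q _ => (mul_assoc _ _ _).symm
    exact (e.trans e2) ▸ h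
end
end

section
/- Let x : ℝ≥0 → X be a replicator trajectory in an N-player polymatrix game such that there exists ε > 0 with x_{iα}(t) ≥ ε for all players i, strategies α, and times t ≥ 0 (the trajectory is bounded away from the boundary). Then for every player i ∈ V and every strategy α ∈ A_i, lim_{T→∞} (1/T) ∫_0^T (u_{iα}(x(τ)) − u_i(x(τ))) dτ = 0. -/
open Finset Filter MeasureTheory Topology

noncomputable section

/-- If a replicator trajectory in a polymatrix game is bounded away
from the boundary of the simplex product (`x_{iα}(t) ≥ ε > 0` for all `i, α, t ≥ 0`),
then for every player `i` and strategy `α` the time-average advantage of the pure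
strategy vanishes: `lim_{T→∞} (1/T) ∫_0^T (u_{iα}(x(τ)) − u_i(x(τ))) dτ = 0`. -/
theorem time_average_pure_advantage_vanishes
    {V : Type} [Fintype V] [DecidableEq V] {n : V → ℕ} (hn : ∀ i, 0 < n i)
    (E : V → V → Prop) [DecidableRel E] (hE : Symmetric E)
    (A : ∀ i j : V, Matrix (Fin (n i)) (Fin (n j)) ℝ)
    (hA0 : ∀ i j, ¬ E i j → A i j = 0)
    (x : ℝ → ∀ i : V, Fin (n i) → ℝ)
    (hx : IsReplicator E A x)
    (ε : ℝ) (hε : 0 < ε)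
    (hbdd : ∀ t, 0 ≤ t → ∀ (i : V) (α : Fin (n i)), ε ≤ x t i α) :
    ∀ (i : V) (α : Fin (n i)),
      Tendsto (fun T : ℝ =>
          (∫ τ in (0:ℝ)..T, (putil E A (x τ) i α - util E A (x τ) i)) / T)
        atTop (𝓝 0) := by
  intro i α
  -- continuity of coordinates on [0,∞)
  have hcont : ∀ (j : V) (β : Fin (n j)), ∀ t ∈ Set.Ici (0:ℝ),
      ContinuousWithinAt (fun s => x s j β) (Set.Ici (0:ℝ)) t := by
    intro j β t ht
    exact (hx.2 t ht j β).continuousAt.continuousWithinAt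
  have hcontOn : ∀ (j : V) (β : Fin (n j)),
      ContinuousOn (fun s => x s j β) (Set.Ici (0:ℝ)) := fun j β t ht => hcont j β t ht
  set g : ℝ → ℝ := fun s => putil E A (x s) i α - util E A (x s) i with hg
  have hgcont : ContinuousOn g (Set.Ici (0:ℝ)) := by
    apply ContinuousOn.sub
    · unfold putil
      apply continuousOn_finset_sum
      intro j _
      apply continuousOn_finset_sum
      intro β _
      exact continuousOn_const.mul (hcontOn j β)
    · unfold util
      apply continuousOn_finset_sum
      intro j _
      apply continuousOn_finset_sum
      intro γ _
      apply continuousOn_finset_sum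
      intro β _
      exact ((hcontOn i γ).mul continuousOn_const).mul (hcontOn j β)
  -- positivity and bounds
  have hpos : ∀ t, 0 ≤ t → 0 < x t i α := fun t ht => lt_of_lt_of_le hε (hbdd t ht i α)
  have hle1 : ∀ t, 0 ≤ t → x t i α ≤ 1 := by
    intro t ht
    have h := (hx.1 t ht).2 i
    calc x t i α ≤ ∑ β, x t i β :=
          Finset.single_le_sum (fun β _ => (hx.1 t ht).1 i β) (Finset.mem_univ α)
      _ = 1 := h
  -- derivative of log
  have hlog : ∀ t, 0 ≤ t →
      HasDerivAt (fun s => Real.log (x s i α)) (g t) t := by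
    intro t ht
    have := (hx.2 t ht i α).log (ne_of_gt (hpos t ht))
    have heq : x t i α * (putil E A (x t) i α - util E A (x t) i) / x t i α = g t := by
      rw [hg]; field_simp [ne_of_gt (hpos t ht)]
    rwa [heq] at this
  -- FTC
  have hFTC : ∀ T : ℝ, 0 ≤ T →
      (∫ τ in (0:ℝ)..T, g τ) = Real.log (x T i α) - Real.log (x 0 i α) := by
    intro T hT
    apply intervalIntegral.integral_eq_sub_of_hasDerivAt
    · intro t htmem
      rw [Set.uIcc_of_le hT] at htmem
      exact hlog t htmem.1
    · apply ContinuousOn.intervalIntegrable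
      apply hgcont.mono
      rw [Set.uIcc_of_le hT]
      exact fun s hs => hs.1
  have hεle1 : ε ≤ 1 := le_trans (hbdd 0 le_rfl i α) (hle1 0 le_rfl)
  have hlogε : Real.log ε ≤ 0 := Real.log_nonpos hε.le hεle1
  have hlogbd : ∀ t, 0 ≤ t → |Real.log (x t i α)| ≤ -Real.log ε := by
    intro t ht
    rw [abs_le]
    constructor
    · have := Real.log_le_log hε (hbdd t ht i α)
      linarith
    · have := Real.log_nonpos (hpos t ht).le (hle1 t ht)
      linarith
  set C : ℝ := -2 * Real.log ε with hC
  have hCnn : 0 ≤ C := by rw [hC]; linarith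
  have hbound : ∀ᶠ T : ℝ in atTop,
      ‖(∫ τ in (0:ℝ)..T, g τ) / T‖ ≤ C / T := by
    filter_upwards [eventually_ge_atTop (1:ℝ)] with T hT
    have hT0 : (0:ℝ) ≤ T := le_trans zero_le_one hT
    have hTpos : (0:ℝ) < T := lt_of_lt_of_le zero_lt_one hT
    rw [hFTC T hT0]
    rw [Real.norm_eq_abs, abs_div, abs_of_pos hTpos]
    gcongr
    calc |Real.log (x T i α) - Real.log (x 0 i α)|
        ≤ |Real.log (x T i α)| + |Real.log (x 0 i α)| := abs_sub _ _
      _ ≤ -Real.log ε + -Real.log ε := add_le_add (hlogbd T hT0) (hlogbd 0 le_rfl)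
      _ = C := by ring
  have hlim : Tendsto (fun T : ℝ => C / T) atTop (𝓝 0) :=
    tendsto_const_nhds.div_atTop tendsto_id
  exact squeeze_zero_norm' hbound hlim
end
end

section
/- Let A^{ii} ∈ ℝ^{n_i×n_i} be an antisymmetric matrix (A^{ii} = −(A^{ii})^T) and define, for z ∈ ℝ^{n_i}, the per-player transformed vector field G_{iα}(z) = Σ_{β∈A_i} (A^{ii}_{αβ} − A^{ii}_{1β}) e^{z_β}/(Σ_{ℓ=1}^{n_i} e^{z_ℓ}). Then the per-player divergence vanishes: Σ_{α∈A_i} ∂G_{iα}(z)/∂z_α = 0 for every z ∈ ℝ^{n_i}; in particular, the antisymmetry implies the cancellation Σ_{(α,β): β≠α} (−A^{ii}_{αβ} − A^{ii}_{βα}) e^{z_α + z_β}/(Σ_ℓ e^{z_ℓ})² = 0. -/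
open Finset

noncomputable section

/-- For an antisymmetric matrix `A = −Aᵀ`, the per-player transformed
vector field `G_α(z) = Σ_β (A_{αβ} − A_{1β}) e^{z_β}/(Σ_ℓ e^{z_ℓ})` has vanishing
divergence: `Σ_α ∂G_α(z)/∂z_α = 0` for every `z`; in particular, antisymmetry yields the
cancellation `Σ_{(α,β): β≠α} (−A_{αβ} − A_{βα}) e^{z_α+z_β}/(Σ_ℓ e^{z_ℓ})² = 0`. -/
theorem selfloop_divergence_vanishes
    (m : ℕ) (hm : 0 < m)
    (A : Matrix (Fin m) (Fin m) ℝ)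
    (hA : ∀ α β, A α β = - A β α)
    (z : Fin m → ℝ) :
    (∑ α, deriv (fun t : ℝ =>
        ∑ β, ((A α β - A ⟨0, hm⟩ β) * Real.exp (Function.update z α t β))
          / (∑ ℓ, Real.exp (Function.update z α t ℓ))) (z α) = 0) ∧
    (∑ α, ∑ β ∈ univ.filter (fun β => β ≠ α),
        ((-A α β - A β α) * Real.exp (z α + z β)) / (∑ ℓ, Real.exp (z ℓ)) ^ 2 = 0) := by
  have hne : Nonempty (Fin m) := ⟨⟨0, hm⟩⟩
  set S := ∑ ℓ, Real.exp (z ℓ) with hSdef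
  have hS : 0 < S := Finset.sum_pos (fun i _ => Real.exp_pos _) univ_nonempty
  have hAdiag : ∀ α, A α α = 0 := fun α => by have := hA α α; linarith
  constructor
  · -- divergence vanishes
    have key : ∀ α : Fin m, deriv (fun t : ℝ =>
          ∑ β, ((A α β - A ⟨0, hm⟩ β) * Real.exp (Function.update z α t β))
            / (∑ ℓ, Real.exp (Function.update z α t ℓ))) (z α)
        = ((A α α - A ⟨0, hm⟩ α) * Real.exp (z α) * S
            - (∑ β, (A α β - A ⟨0, hm⟩ β) * Real.exp (z β)) * Real.exp (z α)) / S ^ 2 := by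
      intro α
      have hf : HasDerivAt
          (fun t : ℝ => ∑ β, (A α β - A ⟨0, hm⟩ β) * Real.exp (Function.update z α t β))
          ((A α α - A ⟨0, hm⟩ α) * Real.exp (z α)) (z α) := by
        have h := HasDerivAt.sum (u := univ)
          (A := fun β (t : ℝ) => (A α β - A ⟨0, hm⟩ β) * Real.exp (Function.update z α t β))
          (A' := fun β => if β = α then (A α α - A ⟨0, hm⟩ α) * Real.exp (z α) else 0)
          (x := z α) (by
            intro β _
            by_cases hβ : β = α
            · subst hβ
              simp only [Function.update_self, if_pos rfl]
              exact (Real.hasDerivAt_exp _).const_mul _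
            · simp only [Function.update_of_ne hβ, if_neg hβ]
              exact hasDerivAt_const _ _)
        simpa [Finset.sum_ite_eq', Finset.sum_fn] using h
      have hg : HasDerivAt
          (fun t : ℝ => ∑ ℓ, Real.exp (Function.update z α t ℓ))
          (Real.exp (z α)) (z α) := by
        have h := HasDerivAt.sum (u := univ)
          (A := fun ℓ (t : ℝ) => Real.exp (Function.update z α t ℓ))
          (A' := fun ℓ => if ℓ = α then Real.exp (z α) else 0)
          (x := z α) (by
            intro ℓ _
            by_cases hℓ : ℓ = α
            · subst hℓ
              simp only [Function.update_self, if_pos rfl]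
              exact Real.hasDerivAt_exp _
            · simp only [Function.update_of_ne hℓ, if_neg hℓ]
              exact hasDerivAt_const _ _)
        simpa [Finset.sum_ite_eq', Finset.sum_fn] using h
      have hg0 : (∑ ℓ, Real.exp (Function.update z α (z α) ℓ)) ≠ 0 := by
        rw [Function.update_eq_self]
        exact hS.ne'
      have hd := (hf.div hg hg0).deriv
      simp only [Pi.div_def] at hd
      have heq : (fun t : ℝ =>
          ∑ β, ((A α β - A ⟨0, hm⟩ β) * Real.exp (Function.update z α t β))
            / (∑ ℓ, Real.exp (Function.update z α t ℓ)))
          = fun t : ℝ =>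
          (∑ β, (A α β - A ⟨0, hm⟩ β) * Real.exp (Function.update z α t β))
            / (∑ ℓ, Real.exp (Function.update z α t ℓ)) := by
        funext t
        rw [Finset.sum_div]
      rw [heq, hd]
      simp only [Function.update_eq_self]
      rw [← hSdef]
    rw [Finset.sum_congr rfl (fun α _ => key α), ← Finset.sum_div, div_eq_zero_iff]
    left
    have hT : ∑ α, ∑ β, A α β * Real.exp (z β) * Real.exp (z α) = 0 := by
      have h1 : (∑ α, ∑ β, A α β * Real.exp (z β) * Real.exp (z α))
          = ∑ α, ∑ β, -(A α β * Real.exp (z β) * Real.exp (z α)) := by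
        rw [Finset.sum_comm]
        refine Finset.sum_congr rfl fun x _ => Finset.sum_congr rfl fun y _ => ?_
        rw [hA y x]; ring
      simp only [Finset.sum_neg_distrib] at h1
      linarith
    set K := ∑ β, A ⟨0, hm⟩ β * Real.exp (z β) with hK
    have hnum : ∀ α : Fin m, (A α α - A ⟨0, hm⟩ α) * Real.exp (z α) * S
        - (∑ β, (A α β - A ⟨0, hm⟩ β) * Real.exp (z β)) * Real.exp (z α)
        = -(∑ β, A α β * Real.exp (z β) * Real.exp (z α))
          + (K * Real.exp (z α) - A ⟨0, hm⟩ α * Real.exp (z α) * S) := by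
      intro α
      rw [hAdiag α]
      simp only [sub_mul, Finset.sum_sub_distrib, Finset.sum_mul, hK]
      ring
    rw [Finset.sum_congr rfl (fun α _ => hnum α), Finset.sum_add_distrib,
      Finset.sum_neg_distrib, hT, Finset.sum_sub_distrib, ← Finset.mul_sum,
      ← Finset.sum_mul, ← hSdef, ← hK]
    ring
  · refine Finset.sum_eq_zero fun α _ => Finset.sum_eq_zero fun β _ => ?_
    rw [hA α β]
    ring
end
end
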